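/- Let f : {±1}^n → ℝ. Sample p uniformly from [−1,1] and x ∈ {±1}^n with independent coordinates each of expectation p. Then E[f(x) · Σ_{i=1}^n (x_i − p) + (f(x) − p)²] ≥ 1/3. -/

import Mathlib

/-!
Write `w_x(p) = ∏ᵢ (1 + xᵢ p) / 2` for the probability of `x` under `p^n`. Since `xᵢ² = 1`,
`(1 - p²) w_x'(p) = w_x(p) ∑ᵢ (xᵢ - p)`, so `w_x(p) (∑ᵢ (xᵢ - p) - 2p)` is the derivative of
`(1 - p²) w_x(p)`, which vanishes at `p = ±1`. Integrating over `p` therefore replaces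
`f(x) ∑ᵢ (xᵢ - p)` by `2p f(x)`, and the expectation becomes `E[f(x)² + p²] ≥ E[p²] = 1/3`.
-/

open Finset intervalIntegral

section BiasedDensity

variable {ι : Type*} [Fintype ι]

noncomputable def biasedDensity (ε : ι → ℝ) (p : ℝ) : ℝ := ∏ i, (1 + ε i * p) / 2

@[fun_prop]
lemma continuous_biasedDensity (ε : ι → ℝ) : Continuous (biasedDensity ε) := by
  unfold biasedDensity
  fun_prop

lemma biasedDensity_nonneg {ε : ι → ℝ} (hε : ∀ i, |ε i| ≤ 1) {p : ℝ} (hp : |p| ≤ 1) :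
    0 ≤ biasedDensity ε p := by
  refine prod_nonneg fun i _ => div_nonneg ?_ zero_le_two
  have : |ε i * p| ≤ 1 := by
    rw [abs_mul]
    exact mul_le_one₀ (hε i) (abs_nonneg p) hp
  linarith [neg_abs_le (ε i * p)]

lemma sum_biasedDensity_sign [DecidableEq ι] (p : ℝ) :
    ∑ x : ι → Bool, biasedDensity (fun i => if x i then 1 else -1) p = 1 := by
  unfold biasedDensity
  rw [← Fintype.prod_sum (fun _ (b : Bool) => (1 + (if b then (1 : ℝ) else -1) * p) / 2)]
  simp only [Fintype.univ_bool, mem_singleton, Bool.true_eq_false, not_false_eq_true,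
    sum_insert, ite_true, sum_singleton, Bool.false_eq_true, ite_false]
  ring_nf
  exact prod_const_one

lemma hasDerivAt_one_sub_sq_mul_biasedDensity {ε : ι → ℝ} (hε : ∀ i, ε i ^ 2 = 1) (p : ℝ) :
    HasDerivAt (fun p => (1 - p ^ 2) * biasedDensity ε p)
      (biasedDensity ε p * (∑ i, (ε i - p) - 2 * p)) p := by
  classical
  have hsq : HasDerivAt (fun p : ℝ => 1 - p ^ 2) (-(2 * p)) p := by
    simpa using (hasDerivAt_pow 2 p).const_sub 1
  have hprod : HasDerivAt (fun p => ∏ i, (1 + ε i * p) / 2)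
      (∑ i, (∏ j ∈ univ.erase i, (1 + ε j * p) / 2) * (ε i / 2)) p := by
    simpa [smul_eq_mul] using HasDerivAt.fun_finsetProd (u := univ)
      (f := fun i p => (1 + ε i * p) / 2) (f' := fun i => ε i / 2) fun i _ => by
        simpa using (((hasDerivAt_id p).const_mul (ε i)).const_add 1).div_const 2
  -- `(1 - p²) ε / 2 = (ε - p) (1 + ε p) / 2` because `ε² = 1`
  have hfactor : ∀ i, (1 - p ^ 2) * ((∏ j ∈ univ.erase i, (1 + ε j * p) / 2) * (ε i / 2))
      = (ε i - p) * biasedDensity ε p := by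
    intro i
    rw [biasedDensity, ← mul_prod_erase univ _ (mem_univ i)]
    linear_combination (-(∏ j ∈ univ.erase i, (1 + ε j * p) / 2) * p / 2) * hε i
  refine (hsq.mul hprod).congr_deriv ?_
  rw [mul_sum, sum_congr rfl fun i _ => hfactor i, ← sum_mul, biasedDensity]
  ring

lemma integral_biasedDensity_mul_score_add_sq {ε : ι → ℝ} (hε : ∀ i, ε i ^ 2 = 1) (c : ℝ) :
    ∫ p in (-1 : ℝ)..1, biasedDensity ε p * (c * ∑ i, (ε i - p) + (c - p) ^ 2)
      = ∫ p in (-1 : ℝ)..1, biasedDensity ε p * (c ^ 2 + p ^ 2) := by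
  have hboundary : ∫ p in (-1 : ℝ)..1, biasedDensity ε p * (∑ i, (ε i - p) - 2 * p) = 0 := by
    rw [integral_eq_sub_of_hasDerivAt (fun p _ => hasDerivAt_one_sub_sq_mul_biasedDensity hε p)
      ((by fun_prop : Continuous _).intervalIntegrable _ _)]
    norm_num
  have hsplit : ∀ p, biasedDensity ε p * (c * ∑ i, (ε i - p) + (c - p) ^ 2)
      = c * (biasedDensity ε p * (∑ i, (ε i - p) - 2 * p))
        + biasedDensity ε p * (c ^ 2 + p ^ 2) := fun p => by ring
  simp only [hsplit]
  rw [integral_add ((by fun_prop : Continuous _).intervalIntegrable _ _)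
    ((by fun_prop : Continuous _).intervalIntegrable _ _), integral_const_mul, hboundary]
  ring

end BiasedDensity

/-- Proposition: correlation/error tradeoff with the bias `p`:
For `f : {±1}^n → ℝ`, sampling `p` uniform in `[-1,1]` and `x ~ p^n`,
`E[f(x)·∑_i (x_i - p) + (f(x) - p)²] ≥ 1/3`. -/
theorem stmt3 (n : ℕ) (f : (Fin n → Bool) → ℝ) :
    (1 / 3 : ℝ) ≤ (1 / 2) * ∫ p in (-1 : ℝ)..1,
      ∑ x : Fin n → Bool,
        (∏ i, (1 + (if x i then (1 : ℝ) else -1) * p) / 2) *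
          (f x * (∑ i, ((if x i then (1 : ℝ) else -1) - p)) + (f x - p) ^ 2) := by
  set w : (Fin n → Bool) → ℝ → ℝ := fun x => biasedDensity fun i => if x i then 1 else -1
  have hsign : ∀ (x : Fin n → Bool) i, (if x i then (1 : ℝ) else -1) ^ 2 = 1 := by
    intro x i; split_ifs <;> norm_num
  have hle : ∀ p ∈ Set.Icc (-1 : ℝ) 1, p ^ 2 ≤ ∑ x, w x p * (f x ^ 2 + p ^ 2) := by
    intro p hp
    calc p ^ 2 = ∑ x, w x p * p ^ 2 := by rw [← sum_mul, sum_biasedDensity_sign, one_mul]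
      _ ≤ _ := sum_le_sum fun x _ => mul_le_mul_of_nonneg_left (by nlinarith)
          (biasedDensity_nonneg (fun i => by split_ifs <;> norm_num) (abs_le.2 hp))
  calc (1 / 3 : ℝ) = 1 / 2 * ∫ p in (-1 : ℝ)..1, p ^ 2 := by norm_num [integral_pow]
    _ ≤ 1 / 2 * ∫ p in (-1 : ℝ)..1, ∑ x, w x p * (f x ^ 2 + p ^ 2) := by
      gcongr
      exact integral_mono_on (by norm_num) ((by fun_prop : Continuous _).intervalIntegrable _ _)
        ((by fun_prop : Continuous _).intervalIntegrable _ _) hle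
    _ = _ := by
      rw [integral_finsetSum fun x _ => (by fun_prop : Continuous _).intervalIntegrable _ _,
        integral_finsetSum fun x _ => (by fun_prop : Continuous _).intervalIntegrable _ _]
      exact congrArg _ (sum_congr rfl fun x _ =>
        (integral_biasedDensity_mul_score_add_sq (hsign x) (f x)).symm)
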